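/- arXiv:1510.05935 — 6 statements merged into one kernel-verified Lean document; each statement's English description precedes it below -/
import Mathlib

section
/- Let ℓ be a prime, r ≥ 1, and t, u' integers. Then the number of matrices σ ∈ M₂(ℤ/ℓ^r ℤ) with tr(σ) ≡ t (mod ℓ^r) and det(σ) ≡ u' (mod ℓ^r) equals ℓ^r · Σ_{j=0}^{r} φ(ℓ^{r−j}) · #{0 ≤ a < ℓ^j : a² − t a + u' ≡ 0 (mod ℓ^j)}. -/
open Finset

lemma card_val_dvd {n e : ℕ} [NeZero n] (he : e ∣ n) :
    Fintype.card {c : ZMod n // e ∣ c.val} = n / e := by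
  obtain ⟨k, hk⟩ := he
  have hn : n ≠ 0 := NeZero.ne n
  have he0 : 0 < e := by
    rcases Nat.eq_zero_or_pos e with h | h
    · subst h; simp at hk; exact absurd hk hn
    · exact h
  have hkk : ∀ j : Fin k, e * (j : ℕ) < n := by
    intro j
    calc e * (j : ℕ) < e * k := by
          exact (mul_lt_mul_iff_right₀ he0).mpr j.2
      _ = n := hk.symm
  have E : {c : ZMod n // e ∣ c.val} ≃ Fin k :=
    { toFun := fun c => ⟨c.1.val / e, by
        have : c.1.val < n := ZMod.val_lt c.1
        rw [Nat.div_lt_iff_lt_mul he0]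
        calc c.1.val < n := this
          _ = e * k := hk
          _ = k * e := Nat.mul_comm _ _⟩
      invFun := fun j => ⟨((e * (j : ℕ) : ℕ) : ZMod n), by
        rw [ZMod.val_natCast_of_lt (hkk j)]
        exact Dvd.intro _ rfl⟩
      left_inv := fun c => by
        apply Subtype.ext
        simp only
        rw [Nat.mul_div_cancel' c.2]
        exact ZMod.natCast_rightInverse c.1
      right_inv := fun j => by
        apply Fin.ext
        simp only
        rw [ZMod.val_natCast_of_lt (hkk j), Nat.mul_div_cancel_left _ he0] }
  rw [Fintype.card_congr E, Fintype.card_fin, hk, Nat.mul_div_cancel_left _ he0]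

lemma card_mul_eq_zero {n : ℕ} [NeZero n] (b : ZMod n) :
    Fintype.card {c : ZMod n // b * c = 0} = Nat.gcd b.val n := by
  set d := Nat.gcd b.val n with hd
  have hn0 : 0 < n := Nat.pos_of_ne_zero (NeZero.ne n)
  have hd0 : 0 < d := Nat.gcd_pos_of_pos_right _ hn0
  have hdn : d ∣ n := Nat.gcd_dvd_right _ _
  have hdb : d ∣ b.val := Nat.gcd_dvd_left _ _
  have hcop : (b.val / d).Coprime (n / d) := Nat.coprime_div_gcd_div_gcd hd0
  obtain ⟨b', hb'⟩ := hdb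
  obtain ⟨n', hn'⟩ := hdn
  have hb'' : b.val / d = b' := by rw [hb', Nat.mul_div_cancel_left _ hd0]
  have hn'' : n / d = n' := by rw [hn', Nat.mul_div_cancel_left _ hd0]
  rw [hb'', hn''] at hcop
  have key : ∀ c : ZMod n, b * c = 0 ↔ n' ∣ c.val := by
    intro c
    have h1 : b * c = ((b.val * c.val : ℕ) : ZMod n) := by
      rw [Nat.cast_mul, ZMod.natCast_rightInverse b, ZMod.natCast_rightInverse c]
    rw [h1, ZMod.natCast_eq_zero_iff]
    constructor
    · intro h
      have h' : d * n' ∣ d * (b' * c.val) := by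
        rw [← mul_assoc, ← hb', ← hn']; exact h
      have h2 : n' ∣ b' * c.val := (mul_dvd_mul_iff_left hd0.ne').mp h'
      exact (hcop.symm).dvd_of_dvd_mul_left h2
    · intro h
      have h' : d * n' ∣ d * (b' * c.val) :=
        mul_dvd_mul_left d (Dvd.dvd.mul_left h b')
      rw [← mul_assoc, ← hb', ← hn'] at h'
      exact h'
  have hn'0 : 0 < n' := by
    rcases Nat.eq_zero_or_pos n' with h | h
    · subst h; rw [Nat.mul_zero] at hn'; exact absurd hn' hn0.ne'
    · exact h
  have E := Equiv.subtypeEquivRight key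
  rw [Fintype.card_congr E, card_val_dvd ⟨d, by rw [hn', mul_comm]⟩, hn',
    mul_comm d n', Nat.mul_div_cancel_left _ hn'0]

lemma card_mul_eq {n : ℕ} [NeZero n] (b m : ZMod n) :
    Fintype.card {c : ZMod n // b * c = m} =
      if Nat.gcd b.val n ∣ m.val then Nat.gcd b.val n else 0 := by
  set d := Nat.gcd b.val n with hd
  split_ifs with h
  · obtain ⟨e, he⟩ := h
    have hbez := Nat.gcd_eq_gcd_ab b.val n
    have h2 : (d : ZMod n) = b * ((Nat.gcdA b.val n : ℤ) : ZMod n) := by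
      have h3 := congrArg (fun z : ℤ => (z : ZMod n)) hbez
      push_cast at h3
      rw [ZMod.natCast_self, zero_mul, add_zero] at h3
      rw [h3, ZMod.natCast_val, ZMod.cast_id]
    have hc₀ : b * (((Nat.gcdA b.val n : ℤ) : ZMod n) * (e : ZMod n)) = m := by
      rw [← mul_assoc, ← h2]
      have : m = ((m.val : ℕ) : ZMod n) := (ZMod.natCast_rightInverse m).symm
      rw [this, he, Nat.cast_mul]
    set c₀ := ((Nat.gcdA b.val n : ℤ) : ZMod n) * (e : ZMod n) with hc0
    have E : {c : ZMod n // b * c = m} ≃ {c : ZMod n // b * c = 0} :=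
      { toFun := fun c => ⟨c.1 - c₀, by rw [mul_sub, c.2, hc₀, sub_self]⟩
        invFun := fun c => ⟨c.1 + c₀, by rw [mul_add, c.2, hc₀, zero_add]⟩
        left_inv := fun c => Subtype.ext (sub_add_cancel _ _)
        right_inv := fun c => Subtype.ext (add_sub_cancel_right _ _) }
    rw [Fintype.card_congr E, card_mul_eq_zero]
  · rw [Fintype.card_eq_zero_iff]
    refine ⟨fun c => h ?_⟩
    obtain ⟨c, hc⟩ := c
    have h1 : m = ((b.val * c.val : ℕ) : ZMod n) := by
      rw [Nat.cast_mul, ZMod.natCast_rightInverse b, ZMod.natCast_rightInverse c, hc]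
    have h2 : m.val = (b.val * c.val) % n := by rw [h1, ZMod.val_natCast]
    rw [h2, Nat.dvd_mod_iff (Nat.gcd_dvd_right _ _)]
    exact Dvd.dvd.mul_right (Nat.gcd_dvd_left _ _) _


lemma card_pairs {n : ℕ} [NeZero n] (m : ZMod n) :
    Fintype.card {p : ZMod n × ZMod n // p.1 * p.2 = m} =
      ∑ d ∈ n.divisors, Nat.totient (n / d) * (if d ∣ m.val then d else 0) := by
  have hn0 : 0 < n := Nat.pos_of_ne_zero (NeZero.ne n)
  rw [Fintype.card_congr (Equiv.subtypeProdEquivSigmaSubtype (fun b c : ZMod n => b * c = m)),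
    Fintype.card_sigma]
  have step1 : ∀ b : ZMod n, Fintype.card {c : ZMod n // b * c = m}
      = if n.gcd b.val ∣ m.val then n.gcd b.val else 0 := by
    intro b; rw [_root_.card_mul_eq, Nat.gcd_comm]
  rw [Finset.sum_congr rfl (fun b _ => step1 b)]
  have step2 : ∑ b : ZMod n, (if n.gcd b.val ∣ m.val then n.gcd b.val else 0)
      = ∑ k ∈ range n, (if n.gcd k ∣ m.val then n.gcd k else 0) := by
    refine Finset.sum_nbij' (t := range n)
      (g := fun k => if n.gcd k ∣ m.val then n.gcd k else 0)
      (fun b => b.val) (fun k => (k : ZMod n)) ?_ ?_ ?_ ?_ ?_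
    · intro b _; exact mem_range.mpr (ZMod.val_lt b)
    · intro k _; exact mem_univ _
    · intro b _; exact ZMod.natCast_rightInverse b
    · intro k hk; exact ZMod.val_natCast_of_lt (mem_range.mp hk)
    · intro b _; rfl
  rw [step2]
  have maps : ∀ k ∈ range n, n.gcd k ∈ n.divisors := fun k _ =>
    Nat.mem_divisors.mpr ⟨Nat.gcd_dvd_left _ _, hn0.ne'⟩
  rw [← Finset.sum_fiberwise_of_maps_to maps (fun k => if n.gcd k ∣ m.val then n.gcd k else 0)]
  apply Finset.sum_congr rfl
  intro d hd
  have hdvd : d ∣ n := (Nat.mem_divisors.mp hd).1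
  have hcongr : ∀ k ∈ filter (fun k => n.gcd k = d) (range n),
      (if n.gcd k ∣ m.val then n.gcd k else 0) = (if d ∣ m.val then d else 0) := by
    intro k hk; rw [(mem_filter.mp hk).2]
  rw [Finset.sum_congr rfl hcongr, Finset.sum_const, smul_eq_mul,
    ← Nat.totient_div_of_dvd hdvd]

lemma card_pairs_pp {ℓ r : ℕ} (hℓ : ℓ.Prime) [NeZero (ℓ ^ r)] (m : ZMod (ℓ ^ r)) :
    Fintype.card {p : ZMod (ℓ ^ r) × ZMod (ℓ ^ r) // p.1 * p.2 = m} =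
      ∑ i ∈ range (r + 1), Nat.totient (ℓ ^ (r - i)) * (if ℓ ^ i ∣ m.val then ℓ ^ i else 0) := by
  rw [card_pairs, Nat.divisors_prime_pow hℓ, Finset.sum_map]
  apply Finset.sum_congr rfl
  intro i hi
  simp only [Function.Embedding.coeFn_mk]
  rw [Nat.pow_div (Nat.lt_succ_iff.mp (mem_range.mp hi)) hℓ.pos]

lemma card_fiber {M K : ℕ} [NeZero M] [NeZero K] (Q : ZMod M → Prop) [DecidablePred Q] :
    Fintype.card {a : ZMod (M * K) // Q ((a.val : ZMod M))} =
      K * Fintype.card {x : ZMod M // Q x} := by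
  have hM0 : 0 < M := Nat.pos_of_ne_zero (NeZero.ne M)
  haveI : NeZero (M * K) := ⟨Nat.mul_ne_zero (NeZero.ne M) (NeZero.ne K)⟩
  have hlt : ∀ (x : ZMod M) (c : Fin K), x.val + M * (c : ℕ) < M * K := by
    intro x c
    have h1 := ZMod.val_lt x
    have hc : (c : ℕ) + 1 ≤ K := c.2
    calc x.val + M * (c : ℕ) < M + M * (c : ℕ) := by omega
      _ = M * ((c : ℕ) + 1) := by ring
      _ ≤ M * K := Nat.mul_le_mul_left _ hc
  have key : ∀ (x : ZMod M) (c : Fin K),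
      (((x.val + M * (c : ℕ) : ℕ)) : ZMod M) = x := by
    intro x c
    push_cast
    rw [ZMod.natCast_self, zero_mul, add_zero, ZMod.natCast_val, ZMod.cast_id]
  have E : {a : ZMod (M * K) // Q ((a.val : ZMod M))} ≃ {x : ZMod M // Q x} × Fin K :=
    { toFun := fun a => (⟨(a.1.val : ZMod M), a.2⟩,
        ⟨a.1.val / M, by
          rw [Nat.div_lt_iff_lt_mul hM0]
          calc a.1.val < M * K := ZMod.val_lt a.1
            _ = K * M := mul_comm _ _⟩)
      invFun := fun p => ⟨((p.1.1.val + M * (p.2 : ℕ) : ℕ) : ZMod (M * K)), by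
        rw [ZMod.val_natCast_of_lt (hlt p.1.1 p.2), key p.1.1 p.2]
        exact p.1.2⟩
      left_inv := fun a => by
        apply Subtype.ext
        simp only
        rw [ZMod.val_natCast, Nat.mod_add_div]
        exact ZMod.natCast_rightInverse a.1
      right_inv := fun p => by
        have hval : (((p.1.1.val + M * (p.2 : ℕ) : ℕ) : ZMod (M * K))).val
            = p.1.1.val + M * (p.2 : ℕ) := ZMod.val_natCast_of_lt (hlt p.1.1 p.2)
        refine Prod.ext (Subtype.ext ?_) (Fin.ext ?_)
        · simp only
          rw [hval, key p.1.1 p.2]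
        · simp only
          rw [hval, Nat.add_mul_div_left _ _ hM0, Nat.div_eq_of_lt (ZMod.val_lt p.1.1),
            zero_add] }
  rw [Fintype.card_congr E, Fintype.card_prod, Fintype.card_fin, mul_comm]

lemma card_fiber' {N M K : ℕ} [NeZero N] [NeZero M] [NeZero K] (h : N = M * K)
    (Q : ZMod M → Prop) [DecidablePred Q] :
    Fintype.card {a : ZMod N // Q ((a.val : ZMod M))} =
      K * Fintype.card {x : ZMod M // Q x} := by
  subst h
  exact card_fiber Q

lemma card_matrix_eq {n : ℕ} [NeZero n] (t u : ZMod n) :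
    Fintype.card {σ : Matrix (Fin 2) (Fin 2) (ZMod n) // σ.trace = t ∧ σ.det = u} =
      ∑ a : ZMod n, Fintype.card {p : ZMod n × ZMod n // p.1 * p.2 = a * (t - a) - u} := by
  have E : {σ : Matrix (Fin 2) (Fin 2) (ZMod n) // σ.trace = t ∧ σ.det = u} ≃
      Σ a : ZMod n, {p : ZMod n × ZMod n // p.1 * p.2 = a * (t - a) - u} :=
    { toFun := fun σ => ⟨σ.1 0 0, ⟨(σ.1 0 1, σ.1 1 0), by
        obtain ⟨htr, hdet⟩ := σ.2
        rw [Matrix.trace_fin_two] at htr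
        rw [Matrix.det_fin_two] at hdet
        have h11 : σ.1 1 1 = t - σ.1 0 0 := by linear_combination htr
        rw [h11] at hdet
        linear_combination -hdet⟩⟩
      invFun := fun x => ⟨!![x.1, x.2.1.1; x.2.1.2, t - x.1], by
        refine ⟨by rw [Matrix.trace_fin_two_of]; ring, ?_⟩
        rw [Matrix.det_fin_two_of]
        linear_combination -x.2.2⟩
      left_inv := fun σ => by
        apply Subtype.ext
        obtain ⟨htr, _⟩ := σ.2
        rw [Matrix.trace_fin_two] at htr
        have h11 : t - σ.1 0 0 = σ.1 1 1 := by linear_combination -htr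
        show !![σ.1 0 0, σ.1 0 1; σ.1 1 0, t - σ.1 0 0] = σ.1
        rw [h11]
        exact (Matrix.eta_fin_two σ.1).symm
      right_inv := fun x => rfl }
  rw [Fintype.card_congr E, Fintype.card_sigma]

/-- The number of matrices `σ ∈ M₂(ℤ/ℓ^r ℤ)` with `tr σ ≡ t` and `det σ ≡ u'` mod `ℓ^r`
equals `ℓ^r · Σ_{j=0}^{r} φ(ℓ^{r−j}) · #{0 ≤ a < ℓ^j : a² − t a + u' ≡ 0 (mod ℓ^j)}`. -/
theorem card_matrices_fixed_trace_det (ℓ r : ℕ) (hℓ : ℓ.Prime) [NeZero ℓ] (hr : 1 ≤ r)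
    (t u' : ℤ) :
    Fintype.card {σ : Matrix (Fin 2) (Fin 2) (ZMod (ℓ ^ r)) //
        σ.trace = (t : ZMod (ℓ ^ r)) ∧ σ.det = (u' : ZMod (ℓ ^ r))} =
      ℓ ^ r * ∑ j ∈ Finset.range (r + 1),
        Nat.totient (ℓ ^ (r - j)) *
          Fintype.card {a : ZMod (ℓ ^ j) //
            a ^ 2 - (t : ZMod (ℓ ^ j)) * a + (u' : ZMod (ℓ ^ j)) = 0} := by
  haveI : NeZero (ℓ ^ r) := ⟨pow_ne_zero r (NeZero.ne ℓ)⟩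
  rw [card_matrix_eq]
  rw [Finset.sum_congr rfl (fun (a : ZMod (ℓ ^ r)) _ => card_pairs_pp hℓ
    (a * ((t : ZMod (ℓ ^ r)) - a) - (u' : ZMod (ℓ ^ r))))]
  rw [Finset.sum_comm, Finset.mul_sum]
  apply Finset.sum_congr rfl
  intro i hi
  have hi' : i ≤ r := Nat.lt_succ_iff.mp (mem_range.mp hi)
  haveI : NeZero (ℓ ^ i) := ⟨pow_ne_zero i (NeZero.ne ℓ)⟩
  haveI : NeZero (ℓ ^ (r - i)) := ⟨pow_ne_zero _ (NeZero.ne ℓ)⟩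
  rw [← Finset.mul_sum]
  have hcond : ∀ a : ZMod (ℓ ^ r),
      (ℓ ^ i ∣ (a * ((t : ZMod (ℓ ^ r)) - a) - (u' : ZMod (ℓ ^ r))).val) ↔
      (((a.val : ZMod (ℓ ^ i))) ^ 2 - (t : ZMod (ℓ ^ i)) * ((a.val : ZMod (ℓ ^ i)))
        + (u' : ZMod (ℓ ^ i)) = 0) := by
    intro a
    set ψ : ZMod (ℓ ^ r) →+* ZMod (ℓ ^ i) := ZMod.castHom (pow_dvd_pow ℓ hi') (ZMod (ℓ ^ i))
      with hψdef
    have hψ : ∀ x : ZMod (ℓ ^ r), ψ x = ((x.val : ZMod (ℓ ^ i))) := by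
      intro x; rw [hψdef, ZMod.castHom_apply, ZMod.natCast_val]
    have h1 : (ℓ ^ i ∣ (a * ((t : ZMod (ℓ ^ r)) - a) - (u' : ZMod (ℓ ^ r))).val) ↔
        ψ (a * ((t : ZMod (ℓ ^ r)) - a) - (u' : ZMod (ℓ ^ r))) = 0 := by
      rw [hψ]
      exact (ZMod.natCast_eq_zero_iff _ _).symm
    have h2 : ψ (a * ((t : ZMod (ℓ ^ r)) - a) - (u' : ZMod (ℓ ^ r))) =
        (ψ a) * ((t : ZMod (ℓ ^ i)) - ψ a) - (u' : ZMod (ℓ ^ i)) := by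
      rw [map_sub, map_mul, map_sub, map_intCast, map_intCast]
    rw [h1, h2, hψ a]
    constructor
    · intro h; linear_combination -h
    · intro h; linear_combination -h
  have hMK : ℓ ^ r = ℓ ^ i * ℓ ^ (r - i) := by
    rw [← pow_add]; congr 1; omega
  have hsum : (∑ a : ZMod (ℓ ^ r),
      (if ℓ ^ i ∣ (a * ((t : ZMod (ℓ ^ r)) - a) - (u' : ZMod (ℓ ^ r))).val then ℓ ^ i else 0))
      = (ℓ ^ (r - i) * Fintype.card {x : ZMod (ℓ ^ i) //
          x ^ 2 - (t : ZMod (ℓ ^ i)) * x + (u' : ZMod (ℓ ^ i)) = 0}) * ℓ ^ i := by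
    rw [← Finset.sum_filter, Finset.sum_const, smul_eq_mul, ← Fintype.card_subtype,
      Fintype.card_congr (Equiv.subtypeEquivRight hcond),
      card_fiber' hMK (fun x : ZMod (ℓ ^ i) =>
        x ^ 2 - (t : ZMod (ℓ ^ i)) * x + (u' : ZMod (ℓ ^ i)) = 0)]
  rw [hsum]
  have hpow : ℓ ^ i * ℓ ^ (r - i) = ℓ ^ r := by rw [← pow_add]; congr 1; omega
  calc Nat.totient (ℓ ^ (r - i)) * ((ℓ ^ (r - i) * Fintype.card {x : ZMod (ℓ ^ i) //
          x ^ 2 - (t : ZMod (ℓ ^ i)) * x + (u' : ZMod (ℓ ^ i)) = 0}) * ℓ ^ i)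
      = (ℓ ^ i * ℓ ^ (r - i)) * (Nat.totient (ℓ ^ (r - i)) * Fintype.card {x : ZMod (ℓ ^ i) //
          x ^ 2 - (t : ZMod (ℓ ^ i)) * x + (u' : ZMod (ℓ ^ i)) = 0}) := by ring
    _ = ℓ ^ r * (Nat.totient (ℓ ^ (r - i)) * Fintype.card {x : ZMod (ℓ ^ i) //
          x ^ 2 - (t : ZMod (ℓ ^ i)) * x + (u' : ZMod (ℓ ^ i)) = 0}) := by rw [hpow]
end

section
/- Let ℓ be a prime, j ≥ 1 an integer, and t, u integers. Then #{0 ≤ a < ℓ^j : a² − t a + u ≡ 0 (mod ℓ^j)} = (1/2)·#{x mod 2ℓ^j·2 : x² ≡ t²−4u (mod 4ℓ^j)}, that is, the number of roots of x² − tx + u modulo ℓ^j equals N_{t²−4u}(ℓ^j) where N_d(m) = #{0 ≤ x < 2m : x² ≡ d (mod 4m)}. -/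
/-!
Completing the square, `(2a - t)² - (t² - 4u) = 4(a² - ta + u)`, so `a ↦ 2a - t` maps the roots of
`x² - tx + u` modulo `m` injectively into the residues modulo `2m` whose square is `t² - 4u`
modulo `4m` (a square modulo `4m` depends only on its root modulo `2m`). The map is onto because
`x² ≡ t² - 4u (mod 4)` forces `x ≡ t (mod 2)`.
-/

/-- `N_d(m) = #{0 ≤ x < 2m : x² ≡ d (mod 4m)}`. -/
def Ncount (d : ℤ) (m : ℕ) : ℕ :=
  ((Finset.range (2 * m)).filter fun x : ℕ =>
    ((x : ZMod (4 * m)) ^ 2 = (d : ZMod (4 * m)))).card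

theorem sq_modEq_sq_of_modEq_two_mul {n x y : ℤ} (h : x ≡ y [ZMOD 2 * n]) :
    x ^ 2 ≡ y ^ 2 [ZMOD 4 * n] := by
  obtain ⟨k, hk⟩ := Int.modEq_iff_dvd.mp h
  exact Int.modEq_iff_dvd.mpr ⟨k * (x + n * k), by linear_combination (y + x + 2 * n * k) * hk⟩

theorem four_mul_dvd_sq_sub_discrim_iff (m s t u : ℤ) :
    4 * m ∣ (2 * s - t) ^ 2 - (t ^ 2 - 4 * u) ↔ m ∣ s ^ 2 - t * s + u := by
  rw [show (2 * s - t) ^ 2 - (t ^ 2 - 4 * u) = 4 * (s ^ 2 - t * s + u) by ring]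
  exact mul_dvd_mul_iff_left four_ne_zero

theorem exists_eq_two_mul_sub_of_four_dvd_sq_sub_discrim {x t u : ℤ}
    (h : 4 ∣ x ^ 2 - (t ^ 2 - 4 * u)) : ∃ s, x = 2 * s - t := by
  have hsq : Even (x ^ 2 - t ^ 2) := by
    rw [even_iff_two_dvd, show x ^ 2 - t ^ 2 = x ^ 2 - (t ^ 2 - 4 * u) - 2 * (2 * u) by ring]
    exact dvd_sub (dvd_trans ⟨2, rfl⟩ h) (dvd_mul_right 2 _)
  obtain ⟨s, hs⟩ : Even (x + t) := by
    simpa [Int.even_sub, Int.even_add, Int.even_pow] using hsq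
  exact ⟨s, by linarith⟩

theorem ZMod.intCast_isRoot_quadratic_iff (m : ℕ) (s t u : ℤ) :
    (s : ZMod m) ^ 2 - t * s + u = 0 ↔ (m : ℤ) ∣ s ^ 2 - t * s + u := by
  rw [← ZMod.intCast_zmod_eq_zero_iff_dvd]
  push_cast
  rfl

theorem ZMod.intCast_two_mul_sub_eq_iff (m : ℕ) (p q t : ℤ) :
    ((2 * p - t : ℤ) : ZMod (2 * m)) = ((2 * q - t : ℤ) : ZMod (2 * m)) ↔
      (p : ZMod m) = (q : ZMod m) := by
  rw [ZMod.intCast_eq_intCast_iff_dvd_sub, ZMod.intCast_eq_intCast_iff_dvd_sub,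
    show 2 * q - t - (2 * p - t) = 2 * (q - p) by ring, Nat.cast_mul, Nat.cast_two]
  exact mul_dvd_mul_iff_left two_ne_zero

theorem ZMod.intCast_sq_eq_intCast_iff (k : ℕ) (y d : ℤ) :
    (y : ZMod k) ^ 2 = d ↔ (k : ℤ) ∣ y ^ 2 - d := by
  rw [← Int.cast_pow, ZMod.intCast_eq_intCast_iff_dvd_sub, dvd_sub_comm]

section

variable {m : ℕ} [NeZero m]

theorem ZMod.four_mul_dvd_sq_val_intCast_sub_iff (y d : ℤ) :
    4 * (m : ℤ) ∣ (((y : ZMod (2 * m)).val : ℤ)) ^ 2 - d ↔ 4 * (m : ℤ) ∣ y ^ 2 - d := by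
  have hval : ((y : ZMod (2 * m)).val : ℤ) ≡ y [ZMOD 2 * m] := by
    rw [ZMod.val_intCast]; exact_mod_cast Int.mod_modEq y (2 * m)
  have hsq := (sq_modEq_sq_of_modEq_two_mul hval).sub_right d
  simp only [← Int.modEq_zero_iff_dvd]
  exact ⟨hsq.symm.trans, hsq.trans⟩

theorem Ncount_eq_card (d : ℤ) :
    Ncount d m = Fintype.card {x : ZMod (2 * m) // 4 * (m : ℤ) ∣ (x.val : ℤ) ^ 2 - d} := by
  rw [Fintype.card_subtype, Ncount]
  refine Finset.card_nbij' (fun n => (n : ZMod (2 * m))) ZMod.val ?_ ?_ ?_ ?_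
  · intro n hn
    rw [Finset.mem_coe, Finset.mem_filter, Finset.mem_range] at hn
    rw [Finset.mem_coe, Finset.mem_filter, ZMod.val_natCast_of_lt hn.1]
    have := (ZMod.intCast_sq_eq_intCast_iff _ n d).mp (by exact_mod_cast hn.2)
    exact ⟨Finset.mem_univ _, by exact_mod_cast this⟩
  · intro x hx
    rw [Finset.mem_coe, Finset.mem_filter] at hx
    rw [Finset.mem_coe, Finset.mem_filter, Finset.mem_range]
    have := (ZMod.intCast_sq_eq_intCast_iff _ x.val d).mpr (by exact_mod_cast hx.2)
    exact ⟨ZMod.val_lt x, by exact_mod_cast this⟩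
  · intro n hn
    rw [Finset.mem_coe, Finset.mem_filter, Finset.mem_range] at hn
    exact ZMod.val_natCast_of_lt hn.1
  · intro x _
    exact ZMod.natCast_zmod_val x

theorem card_roots_quadratic_eq_Ncount_of_neZero (t u : ℤ) :
    Fintype.card {a : ZMod m // a ^ 2 - (t : ZMod m) * a + (u : ZMod m) = 0} =
      Ncount (t ^ 2 - 4 * u) m := by
  have hval (a : ZMod m) : (((a.val : ℤ)) : ZMod m) = a := by simp
  have root_iff (a : ZMod m) : a ^ 2 - t * a + u = 0 ↔ (m : ℤ) ∣ (a.val : ℤ) ^ 2 - t * a.val + u :=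
    by rw [← ZMod.intCast_isRoot_quadratic_iff, hval]
  rw [Ncount_eq_card]
  refine Fintype.card_of_bijective
    (f := fun a => ⟨((2 * (a.1.val : ℤ) - t : ℤ) : ZMod (2 * m)), ?_⟩) ⟨?_, ?_⟩
  · rw [ZMod.four_mul_dvd_sq_val_intCast_sub_iff, four_mul_dvd_sq_sub_discrim_iff, ← root_iff]
    exact a.2
  · rintro a b hab
    have := (ZMod.intCast_two_mul_sub_eq_iff m _ _ t).mp (congrArg Subtype.val hab)
    exact Subtype.ext (by rwa [hval, hval] at this)
  · rintro ⟨x, hx⟩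
    obtain ⟨s, hs⟩ := exists_eq_two_mul_sub_of_four_dvd_sq_sub_discrim (dvd_trans ⟨m, rfl⟩ hx)
    rw [hs, four_mul_dvd_sq_sub_discrim_iff, ← ZMod.intCast_isRoot_quadratic_iff] at hx
    refine ⟨⟨s, hx⟩, Subtype.ext ?_⟩
    change ((2 * ((s : ZMod m).val : ℤ) - t : ℤ) : ZMod (2 * m)) = x
    rw [ZMod.intCast_two_mul_sub_eq_iff m _ s t |>.mpr (hval _), ← hs]
    simp

end

theorem card_roots_quadratic_eq_Ncount_general (ℓ : ℕ) [NeZero ℓ]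
    (j : ℕ) (t u : ℤ) :
    Fintype.card {a : ZMod (ℓ ^ j) //
        a ^ 2 - (t : ZMod (ℓ ^ j)) * a + (u : ZMod (ℓ ^ j)) = 0} =
      Ncount (t ^ 2 - 4 * u) (ℓ ^ j) :=
  card_roots_quadratic_eq_Ncount_of_neZero t u

/-- The number of roots of `x² − t x + u` modulo `ℓ^j` equals `N_{t²−4u}(ℓ^j)`. -/
theorem card_roots_quadratic_eq_Ncount (ℓ : ℕ) (hℓ : ℓ.Prime) [NeZero ℓ]
    (j : ℕ) (hj : 1 ≤ j) (t u : ℤ) :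
    Fintype.card {a : ZMod (ℓ ^ j) //
        a ^ 2 - (t : ZMod (ℓ ^ j)) * a + (u : ZMod (ℓ ^ j)) = 0} =
      Ncount (t ^ 2 - 4 * u) (ℓ ^ j) :=
  card_roots_quadratic_eq_Ncount_general ℓ j t u
end

section
/- Let d be an integer with d ≡ 0 or 1 (mod 4). Then the function m ↦ N_d(m), where N_d(m) = #{0 ≤ x < 2m : x² ≡ d (mod 4m)}, is multiplicative: N_d(m₁m₂) = N_d(m₁)·N_d(m₂) whenever gcd(m₁, m₂) = 1. -/
/-!
By the Chinese remainder theorem the number of square roots of `d` in `ZMod n` is multiplicative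
in `n`. Since `(x + 2m)² = x² + 4m(x + m)`, the roots modulo `4m` come in pairs `x, x + 2m`, so
`N_d(m)` is half the number of roots modulo `4m`. For `d ≡ 0, 1 (mod 4)` there are exactly two roots
modulo `4`, so `N_d(m)` is the number of roots modulo `m` when `m` is odd; for coprime `m₁, m₂`, one
of them, say `m₁`, is odd, and the factor `4` can be moved onto `m₂`.
-/

open Finset

noncomputable def sqrtCount (d : ℤ) (n : ℕ) : ℕ :=
  Nat.card {x : ZMod n // x ^ 2 = d}

theorem sqrtCount_mul (d : ℤ) {a b : ℕ} (h : a.Coprime b) :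
    sqrtCount d (a * b) = sqrtCount d a * sqrtCount d b := by
  let e := ZMod.chineseRemainder h
  have hsq : ∀ x : ZMod (a * b), x ^ 2 = d ↔ (e x).1 ^ 2 = d ∧ (e x).2 ^ 2 = d := fun x => by
    rw [← e.injective.eq_iff, map_pow, map_intCast, Prod.ext_iff]
    rfl
  rw [sqrtCount, Nat.card_congr ((e.toEquiv.subtypeEquiv hsq).trans
    (Equiv.subtypeProdEquivProd (p := fun y : ZMod a => y ^ 2 = d)
      (q := fun z : ZMod b => z ^ 2 = d))), Nat.card_prod]
  rfl

theorem sqrtCount_eq_card_filter_range (d : ℤ) (n : ℕ) [NeZero n] :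
    sqrtCount d n = #{x ∈ range n | ((x : ℕ) : ZMod n) ^ 2 = d} := by
  rw [sqrtCount, Nat.card_eq_fintype_card, Fintype.card_subtype]
  refine card_bij' (fun x _ => x.val) (fun x _ => x) ?_ ?_ ?_ ?_
  · intro x hx
    simpa [ZMod.val_lt] using hx
  · intro x hx
    simpa using (mem_filter.mp hx).2
  · intro x _
    exact ZMod.natCast_zmod_val x
  · intro x hx
    exact ZMod.val_cast_of_lt (mem_range.mp (mem_filter.mp hx).1)

theorem sqrtCount_four_mul (d : ℤ) {m : ℕ} (hm : m ≠ 0) :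
    sqrtCount d (4 * m) = 2 * Ncount d m := by
  have : NeZero (4 * m) := ⟨by omega⟩
  have hshift : ∀ x : ℕ, ((2 * m + x : ℕ) : ZMod (4 * m)) ^ 2 = (x : ZMod (4 * m)) ^ 2 := by
    intro x
    have h4m : ((4 * m : ℕ) : ZMod (4 * m)) = 0 := ZMod.natCast_self _
    push_cast at h4m ⊢
    linear_combination ((x : ZMod (4 * m)) + m) * h4m
  rw [sqrtCount_eq_card_filter_range, Ncount, card_filter, card_filter,
    show range (4 * m) = range (2 * m + 2 * m) by congr 1; ring, sum_range_add]
  simp only [hshift]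
  ring

theorem sqrtCount_four (d : ℤ) (hd : d % 4 = 0 ∨ d % 4 = 1) : sqrtCount d 4 = 2 := by
  have hd' : (d : ZMod 4) = 0 ∨ (d : ZMod 4) = 1 := by
    rw [← ZMod.intCast_mod d 4]
    rcases hd with hd | hd <;> simp [hd]
  rcases hd' with hd' | hd' <;> rw [sqrtCount, hd', Nat.card_eq_fintype_card] <;> decide

theorem Odd.coprime_four_left {n : ℕ} (hn : Odd n) : Nat.Coprime 4 n :=
  Nat.Coprime.pow_left 2 (Nat.coprime_two_left.mpr hn)

theorem Ncount_eq_sqrtCount_of_odd {d : ℤ} (hd : d % 4 = 0 ∨ d % 4 = 1) {m : ℕ} (hm : Odd m) :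
    Ncount d m = sqrtCount d m := by
  have h := sqrtCount_four_mul d hm.pos.ne'
  rw [sqrtCount_mul d hm.coprime_four_left, sqrtCount_four d hd] at h
  omega

theorem Ncount_mul_of_odd {d : ℤ} (hd : d % 4 = 0 ∨ d % 4 = 1) {m₁ m₂ : ℕ} (hm₁ : Odd m₁)
    (h : Nat.Coprime m₁ m₂) : Ncount d (m₁ * m₂) = Ncount d m₁ * Ncount d m₂ := by
  rcases eq_or_ne m₂ 0 with rfl | hm₂
  · simp [Ncount]
  have h4 : Nat.Coprime m₁ (4 * m₂) := hm₁.coprime_four_left.symm.mul_right h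
  have key := sqrtCount_four_mul d (mul_ne_zero hm₁.pos.ne' hm₂)
  rw [mul_left_comm, sqrtCount_mul d h4, sqrtCount_four_mul d hm₂,
    ← Ncount_eq_sqrtCount_of_odd hd hm₁] at key
  linarith

theorem Ncount_multiplicative_general (d : ℤ) (hd : d % 4 = 0 ∨ d % 4 = 1)
    (m₁ m₂ : ℕ) (h : Nat.Coprime m₁ m₂) :
    Ncount d (m₁ * m₂) = Ncount d m₁ * Ncount d m₂ := by
  rcases Nat.even_or_odd m₁ with he₁ | ho₁
  · have ho₂ : Odd m₂ := Nat.coprime_two_left.mp (h.coprime_dvd_left he₁.two_dvd)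
    rw [mul_comm, Ncount_mul_of_odd hd ho₂ h.symm, mul_comm]
  · exact Ncount_mul_of_odd hd ho₁ h

/-- For `d ≡ 0, 1 (mod 4)`, the function `m ↦ N_d(m)` is multiplicative on coprime
arguments. -/
theorem Ncount_multiplicative (d : ℤ) (hd : d % 4 = 0 ∨ d % 4 = 1)
    (m₁ m₂ : ℕ) (h₁ : 0 < m₁) (h₂ : 0 < m₂) (h : Nat.Coprime m₁ m₂) :
    Ncount d (m₁ * m₂) = Ncount d m₁ * Ncount d m₂ :=
  Ncount_multiplicative_general d hd m₁ m₂ h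
end

section
/- Let ℓ be a prime, and let p be an integer with ℓ | (p−1) and ℓ ∤ p. Then for every r ≥ 1, #{τ ∈ M₂(ℤ/ℓ^{r−1}ℤ) : det(I + ℓτ) ≡ p (mod ℓ^r)} = ℓ^{3(r−1)}. -/
/-- Let `ℓ` be a prime and `p` an integer with `ℓ ∣ p − 1` and `ℓ ∤ p`. Then for every
`r ≥ 1`, `#{τ ∈ M₂(ℤ/ℓ^{r−1}ℤ) : det(I + ℓτ) ≡ p (mod ℓ^r)} = ℓ^{3(r−1)}`.
(The matrix `I + ℓτ` is computed using the canonical integer lift of `τ`, since the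
condition is independent of the choice of lift.) -/
theorem card_det_one_add_smul_eq (ℓ : ℕ) (hℓ : ℓ.Prime) [NeZero ℓ]
    (r : ℕ) (hr : 1 ≤ r) (p : ℤ) (h1 : (ℓ : ℤ) ∣ p - 1) (h2 : ¬ (ℓ : ℤ) ∣ p) :
    Fintype.card {τ : Matrix (Fin 2) (Fin 2) (ZMod (ℓ ^ (r - 1))) //
        (((1 + (ℓ : ℤ) • Matrix.of fun i j => ((τ i j).val : ℤ) :
            Matrix (Fin 2) (Fin 2) ℤ).det : ℤ) : ZMod (ℓ ^ r)) = (p : ZMod (ℓ ^ r))} =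
      ℓ ^ (3 * (r - 1)) := by
  obtain ⟨s, rfl⟩ : ∃ s, r = s + 1 := ⟨r - 1, by omega⟩
  simp only [Nat.add_sub_cancel]
  haveI : NeZero (ℓ ^ s) := ⟨pow_ne_zero _ hℓ.pos.ne'⟩
  obtain ⟨q, hq⟩ := h1
  have hℓ0 : (ℓ : ℤ) ≠ 0 := by exact_mod_cast hℓ.pos.ne'
  have hℓpow : ((ℓ : ZMod (ℓ ^ s))) ^ s = 0 := by
    rw [← Nat.cast_pow, ZMod.natCast_self]
  have hunit : ∀ d : ZMod (ℓ ^ s), IsUnit (1 + (ℓ : ZMod (ℓ ^ s)) * d) := fun d =>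
    IsNilpotent.isUnit_one_add ⟨s, by rw [mul_pow, hℓpow, zero_mul]⟩
  have key : ∀ τ : Matrix (Fin 2) (Fin 2) (ZMod (ℓ ^ s)),
      ((((1 + (ℓ : ℤ) • Matrix.of fun i j => ((τ i j).val : ℤ) :
            Matrix (Fin 2) (Fin 2) ℤ).det : ℤ) : ZMod (ℓ ^ (s + 1))) = (p : ZMod (ℓ ^ (s + 1))))
        ↔ τ 0 0 * (1 + (ℓ : ZMod (ℓ ^ s)) * τ 1 1) =
            (q : ZMod (ℓ ^ s)) - τ 1 1 + (ℓ : ZMod (ℓ ^ s)) * (τ 0 1 * τ 1 0) := by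
    intro τ
    have hdet : (1 + (ℓ : ℤ) • Matrix.of fun i j => ((τ i j).val : ℤ) :
        Matrix (Fin 2) (Fin 2) ℤ).det =
        (1 + (ℓ : ℤ) * ((τ 0 0).val : ℤ)) * (1 + (ℓ : ℤ) * ((τ 1 1).val : ℤ)) -
          ((ℓ : ℤ) * ((τ 0 1).val : ℤ)) * ((ℓ : ℤ) * ((τ 1 0).val : ℤ)) := by
      rw [Matrix.det_fin_two]
      simp [Matrix.one_apply, -ZMod.natCast_val]
      try ring
    rw [hdet, ZMod.intCast_eq_intCast_iff, Int.modEq_iff_dvd]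
    have h3 : p - ((1 + (ℓ : ℤ) * ((τ 0 0).val : ℤ)) * (1 + (ℓ : ℤ) * ((τ 1 1).val : ℤ)) -
          ((ℓ : ℤ) * ((τ 0 1).val : ℤ)) * ((ℓ : ℤ) * ((τ 1 0).val : ℤ))) =
        (ℓ : ℤ) * (q - (((τ 0 0).val : ℤ) + ((τ 1 1).val : ℤ) +
          (ℓ : ℤ) * (((τ 0 0).val : ℤ) * ((τ 1 1).val : ℤ) -
            ((τ 0 1).val : ℤ) * ((τ 1 0).val : ℤ)))) := by linear_combination hq
    have h4 : ((ℓ ^ (s + 1) : ℕ) : ℤ) = (ℓ : ℤ) * (ℓ : ℤ) ^ s := by push_cast; ring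
    rw [h3, h4, mul_dvd_mul_iff_left hℓ0]
    have h5 : ((ℓ : ℤ) ^ s) = ((ℓ ^ s : ℕ) : ℤ) := by push_cast; ring
    rw [h5, ← ZMod.intCast_zmod_eq_zero_iff_dvd]
    push_cast [ZMod.natCast_val, ZMod.cast_id]
    constructor <;> intro h <;> linear_combination -h
  let e : {τ : Matrix (Fin 2) (Fin 2) (ZMod (ℓ ^ s)) //
      (((1 + (ℓ : ℤ) • Matrix.of fun i j => ((τ i j).val : ℤ) :
            Matrix (Fin 2) (Fin 2) ℤ).det : ℤ) : ZMod (ℓ ^ (s + 1))) = (p : ZMod (ℓ ^ (s + 1)))}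
      ≃ (ZMod (ℓ ^ s) × ZMod (ℓ ^ s) × ZMod (ℓ ^ s)) :=
  { toFun := fun τ => (τ.1 0 1, τ.1 1 0, τ.1 1 1)
    invFun := fun x =>
      ⟨!![Ring.inverse (1 + (ℓ : ZMod (ℓ ^ s)) * x.2.2) *
            ((q : ZMod (ℓ ^ s)) - x.2.2 + (ℓ : ZMod (ℓ ^ s)) * (x.1 * x.2.1)), x.1;
          x.2.1, x.2.2], by
        rw [key]
        simp
        rw [mul_comm (Ring.inverse _), mul_assoc, Ring.inverse_mul_cancel _ (hunit x.2.2),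
          mul_one]⟩
    left_inv := fun τ => by
      apply Subtype.ext
      dsimp only
      have h := (key τ.1).mp τ.2
      have ha : Ring.inverse (1 + (ℓ : ZMod (ℓ ^ s)) * τ.1 1 1) *
          ((q : ZMod (ℓ ^ s)) - τ.1 1 1 + (ℓ : ZMod (ℓ ^ s)) * (τ.1 0 1 * τ.1 1 0)) =
          τ.1 0 0 := by
        rw [← h, mul_comm (τ.1 0 0), Ring.inverse_mul_cancel_left _ _ (hunit (τ.1 1 1))]
      conv_rhs => rw [Matrix.eta_fin_two τ.1]
      rw [ha]
    right_inv := fun x => by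
      simp }
  refine (Fintype.card_congr e).trans ?_
  simp only [Fintype.card_prod, ZMod.card]
  ring
end

section
/- Let ℓ be a prime and p an integer not divisible by ℓ. Then the limit as r → ∞ of φ(ℓ^r)·#{σ ∈ GL₂(ℤ/ℓ^r ℤ) : det σ ≡ p (mod ℓ^r), σ ≡ I (mod ℓ)} / |GL₂(ℤ/ℓ^r ℤ)| equals 1/(ℓ(ℓ²−1)) if ℓ | (p−1), and equals 0 otherwise. In fact for each r ≥ 1 the ratio is already equal to this value. -/
/-!
Reduction mod `ℓ` maps `GL₂(ℤ/ℓ^r)` onto `GL₂(𝔽_ℓ)` (lift the entries; the lifted determinant is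
a unit because `ℤ/ℓ^r` is local), with kernel `K`. The determinant maps `K` onto the group `U₁` of
units `≡ 1 mod ℓ`, already via `diag(u, 1)`. The matrices counted form the fibre of `det : K → U₁`
over `p`, which is empty unless `p ≡ 1 mod ℓ` and otherwise has `|K| / |U₁|` elements. Since
`|K| = |GL₂(ℤ/ℓ^r)| / |GL₂(𝔽_ℓ)|` and `φ(ℓ^r) = |U₁| (ℓ - 1)`, the ratio is
`(ℓ - 1) / |GL₂(𝔽_ℓ)| = 1 / (ℓ (ℓ² - 1))` for every `r ≥ 1`.
-/

open Matrix

open Classical in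
/-- The ratio `φ(ℓ^r)·#{σ ∈ GL₂(ℤ/ℓ^r ℤ) : det σ ≡ p (mod ℓ^r), σ ≡ I (mod ℓ)} /
|GL₂(ℤ/ℓ^r ℤ)|`. -/
noncomputable def glRatio (ℓ : ℕ) [NeZero ℓ] (p : ℤ) (r : ℕ) : ℝ :=
  (Nat.totient (ℓ ^ r) *
      Fintype.card {σ : Matrix.GeneralLinearGroup (Fin 2) (ZMod (ℓ ^ r)) //
        (σ : Matrix (Fin 2) (Fin 2) (ZMod (ℓ ^ r))).det = (p : ZMod (ℓ ^ r)) ∧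
        ∀ i j, (((σ : Matrix (Fin 2) (Fin 2) (ZMod (ℓ ^ r))) i j).val : ZMod ℓ) =
          (1 : Matrix (Fin 2) (Fin 2) (ZMod ℓ)) i j} : ℝ) /
    (Fintype.card (Matrix.GeneralLinearGroup (Fin 2) (ZMod (ℓ ^ r))) : ℝ)

namespace MonoidHom

variable {G H : Type*} [Group G] [Group H]

theorem card_ker_mul_card_of_surjective [Finite G] (f : G →* H) (hf : Function.Surjective f) :
    Nat.card f.ker * Nat.card H = Nat.card G := by
  rw [← f.ker.card_mul_index, Subgroup.index_ker, range_eq_top.mpr hf, Subgroup.card_top]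

theorem card_fiber_eq_card_ker (f : G →* H) {h : H} (hh : h ∈ f.range) :
    Nat.card {g // f g = h} = Nat.card f.ker := by
  obtain ⟨g₀, rfl⟩ := hh
  exact Nat.card_congr <| (Equiv.mulLeft g₀⁻¹).subtypeEquiv fun g => by
    rw [mem_ker, Equiv.coe_mulLeft, map_mul, map_inv, inv_mul_eq_one, eq_comm]

end MonoidHom

namespace Matrix.GeneralLinearGroup

variable {n : Type*} [Fintype n] [DecidableEq n] {R S : Type*} [CommRing R] [CommRing S]

/-- `u ↦ diag(1, …, u, …, 1)`, with `u` in position `i`. -/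
def diagonalSingle (i : n) : Rˣ →* GL n R :=
  (Units.map (diagonalRingHom n R : (n → R) →* Matrix n n R)).comp
    (MulEquiv.piUnits.symm.toMonoidHom.comp (MonoidHom.mulSingle (fun _ : n => Rˣ) i))

@[simp]
theorem det_diagonalSingle (i : n) (u : Rˣ) : det (diagonalSingle i u) = u := by
  ext
  simp [diagonalSingle, det_diagonal, ← Units.coe_prod]

theorem map_diagonalSingle (f : R →+* S) (i : n) (u : Rˣ) :
    map f (diagonalSingle i u) = diagonalSingle i (Units.map (f : R →* S) u) := by
  ext j k
  rcases eq_or_ne j k with rfl | hjk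
  · by_cases hj : j = i <;> simp [diagonalSingle, hj]
  · simp [diagonalSingle, hjk]

theorem map_surjective {f : R →+* S} [IsLocalHom f] (hf : Function.Surjective f) :
    Function.Surjective (map (n := n) f) := by
  intro M
  obtain ⟨A, hA⟩ : ∃ A : Matrix n n R, A.map f = M :=
    ⟨(M : Matrix n n S).map (Function.surjInv hf), by ext; simp [Function.surjInv_eq hf]⟩
  have hdet : IsUnit A.det := by
    apply isUnit_of_map_unit f
    rw [RingHom.map_det, RingHom.mapMatrix_apply, hA]
    exact (isUnit_iff_isUnit_det _).mp M.isUnit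
  exact ⟨((isUnit_iff_isUnit_det A).mpr hdet).unit, Units.ext hA⟩

theorem map_det_of_mem_ker {f : R →+* S} {σ : GL n R} (hσ : σ ∈ (map f).ker) :
    Units.map (f : R →* S) (det σ) = 1 := by
  rw [← GeneralLinearGroup.map_det, MonoidHom.mem_ker.mp hσ, map_one]

variable (n) in
def detKer (f : R →+* S) : (map (n := n) f).ker →* (Units.map (f : R →* S)).ker :=
  (det.comp (map f).ker.subtype).codRestrict _ fun σ => map_det_of_mem_ker σ.2

theorem detKer_surjective [Nonempty n] (f : R →+* S) : Function.Surjective (detKer n f) := by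
  rintro ⟨u, hu⟩
  obtain ⟨i⟩ := ‹Nonempty n›
  refine ⟨⟨diagonalSingle i u, ?_⟩, Subtype.ext (det_diagonalSingle i u)⟩
  rw [MonoidHom.mem_ker, map_diagonalSingle, MonoidHom.mem_ker.mp hu, map_one]

variable (n) in
def detFiberKer (f : R →+* S) (a : R) : Set (GL n R) :=
  {σ | (σ : Matrix n n R).det = a ∧ map f σ = 1}

theorem card_detFiberKer_mul_card_mul_card [Finite R] [Nonempty n] {f : R →+* S} [IsLocalHom f]
    (hf : Function.Surjective f) {a : R} (ha : f a = 1) :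
    Nat.card (detFiberKer n f a) * Nat.card (Units.map (f : R →* S)).ker * Nat.card (GL n S) =
      Nat.card (GL n R) := by
  have hu : IsUnit a := isUnit_of_map_unit f a (ha ▸ isUnit_one)
  have hu_mem : hu.unit ∈ (Units.map (f : R →* S)).ker := Units.ext ha
  have hfiber : Nat.card (detFiberKer n f a) =
      Nat.card {σ // detKer n f σ = ⟨hu.unit, hu_mem⟩} :=
    Nat.card_congr
      { toFun σ := ⟨⟨σ.1, σ.2.2⟩, Subtype.ext <| Units.ext σ.2.1⟩
        invFun σ :=
          ⟨σ.1.1, congrArg (fun x : (Units.map (f : R →* S)).ker => ((x : Rˣ) : R)) σ.2, σ.1.2⟩ }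
  rw [hfiber,
    (detKer n f).card_fiber_eq_card_ker (MonoidHom.mem_range.mpr (detKer_surjective f _)),
    (detKer n f).card_ker_mul_card_of_surjective (detKer_surjective f),
    (map f).card_ker_mul_card_of_surjective (map_surjective hf)]

end Matrix.GeneralLinearGroup

namespace ZMod

theorem isLocalHom_castHom_pow (ℓ : ℕ) [NeZero ℓ] {r : ℕ} (hr : r ≠ 0) :
    IsLocalHom (castHom (dvd_pow_self ℓ hr) (ZMod ℓ)) where
  map_nonunit a ha := by
    rw [castHom_apply, ← natCast_val, isUnit_iff_coprime] at ha
    rw [← natCast_zmod_val a, isUnit_iff_coprime]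
    exact ha.pow_right r

theorem castHom_intCast_eq_one_iff {ℓ m : ℕ} (h : ℓ ∣ m) (p : ℤ) :
    castHom h (ZMod ℓ) (p : ZMod m) = 1 ↔ (ℓ : ℤ) ∣ p - 1 := by
  rw [map_intCast, ← Int.cast_one, eq_comm, intCast_eq_intCast_iff_dvd_sub]

theorem card_ker_unitsMap_mul_sub_one {ℓ m : ℕ} [Fact ℓ.Prime] [NeZero m] (h : ℓ ∣ m) :
    Nat.card (unitsMap h).ker * (ℓ - 1) = Nat.totient m := by
  rw [← card_units ℓ, ← card_units_eq_totient, Fintype.card_eq_nat_card, Fintype.card_eq_nat_card,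
    (unitsMap h).card_ker_mul_card_of_surjective (unitsMap_surjective h)]

end ZMod

section glRatio

open Matrix.GeneralLinearGroup

variable {ℓ : ℕ} [NeZero ℓ] {r : ℕ}

theorem map_castHom_eq_one_iff {n : Type*} [Fintype n] [DecidableEq n] (hr : r ≠ 0)
    (σ : GL n (ZMod (ℓ ^ r))) :
    map (ZMod.castHom (dvd_pow_self ℓ hr) (ZMod ℓ)) σ = 1 ↔
      ∀ i j, (((σ : Matrix n n (ZMod (ℓ ^ r))) i j).val : ZMod ℓ) =
        (1 : Matrix n n (ZMod ℓ)) i j := by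
  rw [Units.ext_iff, ← Matrix.ext_iff]
  simp [ZMod.natCast_val]

theorem glRatio_eq_div (p : ℤ) (hr : r ≠ 0) :
    glRatio ℓ p r = (Nat.totient (ℓ ^ r) * Nat.card (detFiberKer (Fin 2)
        (ZMod.castHom (dvd_pow_self ℓ hr) (ZMod ℓ)) (p : ZMod (ℓ ^ r))) : ℝ) /
      Nat.card (GL (Fin 2) (ZMod (ℓ ^ r))) := by
  rw [glRatio, Fintype.card_eq_nat_card, Fintype.card_eq_nat_card]
  congr 3
  exact Nat.card_congr <| Equiv.subtypeEquivRight fun σ =>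
    and_congr_right' (map_castHom_eq_one_iff hr σ).symm

theorem glRatio_of_dvd (hℓ : ℓ.Prime) {p : ℤ} (hr : r ≠ 0) (hp : (ℓ : ℤ) ∣ p - 1) :
    glRatio ℓ p r = 1 / ((ℓ : ℝ) * ((ℓ : ℝ) ^ 2 - 1)) := by
  have := Fact.mk hℓ
  have := ZMod.isLocalHom_castHom_pow ℓ hr
  have hcount := card_detFiberKer_mul_card_mul_card (n := Fin 2) (ZMod.castHom_surjective _)
    ((ZMod.castHom_intCast_eq_one_iff (dvd_pow_self ℓ hr) p).mpr hp)
  have htotient := ZMod.card_ker_unitsMap_mul_sub_one (m := ℓ ^ r) (dvd_pow_self ℓ hr)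
  have hGL : Nat.card (GL (Fin 2) (ZMod ℓ)) = (ℓ - 1) * (ℓ * (ℓ ^ 2 - 1)) := by
    have hsq : ℓ ^ 2 - ℓ = (ℓ - 1) * ℓ := by rw [Nat.sub_one_mul, sq]
    rw [card_GL_field, Fin.prod_univ_two, ZMod.card, Fin.val_zero, Fin.val_one, pow_zero, pow_one,
      hsq]
    ring
  have hcard : Nat.totient (ℓ ^ r) * Nat.card (detFiberKer (Fin 2)
      (ZMod.castHom (dvd_pow_self ℓ hr) (ZMod ℓ)) (p : ZMod (ℓ ^ r))) * (ℓ * (ℓ ^ 2 - 1)) =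
      Nat.card (GL (Fin 2) (ZMod (ℓ ^ r))) := by
    rw [← hcount, hGL, ← htotient, ZMod.unitsMap_def]
    ring
  have hℓ1 : (1 : ℝ) < ℓ := by exact_mod_cast hℓ.one_lt
  rw [glRatio_eq_div p hr, div_eq_div_iff (Nat.cast_ne_zero.mpr Nat.card_pos.ne')
    (by nlinarith), one_mul, ← hcard]
  push_cast [Nat.cast_sub (Nat.one_le_pow _ _ hℓ.pos)]
  ring

theorem glRatio_of_not_dvd {p : ℤ} (hr : r ≠ 0) (hp : ¬(ℓ : ℤ) ∣ p - 1) : glRatio ℓ p r = 0 := by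
  have : IsEmpty (detFiberKer (Fin 2)
      (ZMod.castHom (dvd_pow_self ℓ hr) (ZMod ℓ)) (p : ZMod (ℓ ^ r))) := by
    refine ⟨fun σ => hp ?_⟩
    rw [← ZMod.castHom_intCast_eq_one_iff (dvd_pow_self ℓ hr), ← σ.2.1]
    exact congrArg Units.val (map_det_of_mem_ker σ.2.2)
  rw [glRatio_eq_div p hr, Nat.card_of_isEmpty, Nat.cast_zero, mul_zero, zero_div]

end glRatio

theorem glRatio_eq_general (ℓ : ℕ) (hℓ : ℓ.Prime) [NeZero ℓ] (p : ℤ) :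
    (∀ r : ℕ, 1 ≤ r →
      glRatio ℓ p r =
        if (ℓ : ℤ) ∣ p - 1 then 1 / ((ℓ : ℝ) * ((ℓ : ℝ) ^ 2 - 1)) else 0) ∧
    Filter.Tendsto (glRatio ℓ p) Filter.atTop
      (nhds (if (ℓ : ℤ) ∣ p - 1 then 1 / ((ℓ : ℝ) * ((ℓ : ℝ) ^ 2 - 1)) else 0)) := by
  have hconst : ∀ r : ℕ, 1 ≤ r →
      glRatio ℓ p r = if (ℓ : ℤ) ∣ p - 1 then 1 / ((ℓ : ℝ) * ((ℓ : ℝ) ^ 2 - 1)) else 0 := by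
    intro r hr
    split_ifs with hp
    · exact glRatio_of_dvd hℓ (by omega) hp
    · exact glRatio_of_not_dvd (by omega) hp
  exact ⟨hconst, tendsto_const_nhds.congr' <|
    Filter.eventually_atTop.mpr ⟨1, fun r hr => (hconst r hr).symm⟩⟩

/-- For a prime `ℓ` and `p` with `ℓ ∤ p`, the ratio
`φ(ℓ^r)·#{σ ∈ GL₂(ℤ/ℓ^r ℤ) : det σ ≡ p, σ ≡ I mod ℓ} / |GL₂(ℤ/ℓ^r ℤ)|`
equals `1/(ℓ(ℓ²−1))` if `ℓ ∣ p−1` and `0` otherwise, for every `r ≥ 1`,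
and in particular converges to that value as `r → ∞`. -/
theorem glRatio_eq (ℓ : ℕ) (hℓ : ℓ.Prime) [NeZero ℓ] (p : ℤ) (hp : ¬ (ℓ : ℤ) ∣ p) :
    (∀ r : ℕ, 1 ≤ r →
      glRatio ℓ p r =
        if (ℓ : ℤ) ∣ p - 1 then 1 / ((ℓ : ℝ) * ((ℓ : ℝ) ^ 2 - 1)) else 0) ∧
    Filter.Tendsto (glRatio ℓ p) Filter.atTop
      (nhds (if (ℓ : ℤ) ∣ p - 1 then 1 / ((ℓ : ℝ) * ((ℓ : ℝ) ^ 2 - 1)) else 0)) :=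
  glRatio_eq_general ℓ hℓ p
end

section
/- Let ℓ be a prime, r ≥ 1, and let t, u, n be integers with n ≥ 1, u ≡ 1 (mod n), u + 1 − t ≡ 0 (mod n²). Write a = ν_ℓ(n), t₁ = (t−2)/n, u₁ = (u+1−t)/n². Then #{σ ∈ M₂(ℤ/ℓ^r ℤ) : tr σ ≡ t, det σ ≡ u (mod ℓ^r), σ ≡ I (mod ℓ^a)} = Σ_{u₂ mod ℓ^{r−a}, u₂ ≡ u₁ (mod ℓ^{r−2a})} #{σ ∈ M₂(ℤ/ℓ^{r−a}ℤ) : tr σ ≡ t₁ (mod ℓ^{r−a}), det σ ≡ u₂ (mod ℓ^{r−a})}, assuming r ≥ 2a. -/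
/-!
Let `a = ν_ℓ(n)`. Multiplication by `n` is a well-defined injective additive map
`ψ : ℤ/ℓ^(r-a) → ℤ/ℓ^r` whose image is `ℓ^a ℤ/ℓ^r`, so `τ ↦ I + ψ(τ)` (entrywise) is a bijection
from `M₂(ℤ/ℓ^(r-a))` onto the matrices `σ ≡ I (mod ℓ^a)`. For `σ = I + ψ(τ)` one has
`tr σ = 2 + n tr τ` and `det σ = 1 + n tr τ + n² det τ`; cancelling `n` and `n²` (of valuations
`a` and `2a`) turns the conditions on `σ` into `tr τ ≡ t₁ (mod ℓ^(r-a))` and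
`det τ ≡ u₁ (mod ℓ^(r-2a))`, and the right-hand side merely sorts these `τ` by determinant.
-/

open Matrix

theorem Fintype.sum_ite_card_fiber {α β : Type*} [Fintype α] [Fintype β] [DecidableEq β]
    (f : α → β) (p : α → Prop) [DecidablePred p] (Q : β → Prop) [DecidablePred Q] :
    (∑ b : β, if Q b then Fintype.card {a : α // p a ∧ f a = b} else 0) =
      Fintype.card {a : α // p a ∧ Q (f a)} := by
  simp only [Fintype.card_subtype]
  rw [← Finset.sum_filter, Finset.card_eq_sum_card_fiberwise (f := f) (t := {b | Q b})
    (fun a ha => by simp_all)]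
  refine Finset.sum_congr rfl fun b hb => congrArg Finset.card (Finset.ext fun a => ?_)
  simp only [Finset.mem_filter, Finset.mem_univ, true_and] at hb ⊢
  grind

theorem Fintype.card_subtype_comp_eq_of_injective {α β : Type*} [Fintype α] [Fintype β]
    {G : β → α} (hG : Function.Injective G) (P Q : α → Prop) [DecidablePred P]
    [DecidablePred Q] (hQ : ∀ a, Q a ↔ P a ∧ ∃ b, G b = a) :
    Fintype.card {b // P (G b)} = Fintype.card {a // Q a} :=
  Fintype.card_of_bijective (f := fun b => ⟨G b.1, (hQ _).2 ⟨b.2, b.1, rfl⟩⟩)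
    ⟨fun b b' h => Subtype.ext (hG (congrArg Subtype.val h)), fun a => by
      obtain ⟨hP, b, hb⟩ := (hQ a.1).1 a.2
      exact ⟨⟨b, hb ▸ hP⟩, Subtype.ext hb⟩⟩

theorem Nat.exists_eq_pow_padicValNat_mul {ℓ n : ℕ} (hℓ : ℓ.Prime) (hn : n ≠ 0) :
    ∃ m, ¬ ℓ ∣ m ∧ n = ℓ ^ padicValNat ℓ n * m :=
  ⟨ordCompl[ℓ] n, hℓ.coprime_iff_not_dvd.1 (Nat.coprime_ordCompl hℓ hn),
    by rw [← Nat.factorization_def n hℓ, Nat.ordProj_mul_ordCompl_eq_self]⟩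

theorem Matrix.det_one_add_fin_two {R : Type*} [CommRing R] (A : Matrix (Fin 2) (Fin 2) R) :
    (1 + A).det = 1 + A.trace + A.det := by
  simp only [det_fin_two, trace_fin_two, add_apply, one_apply_eq, one_apply_ne, ne_eq,
    zero_ne_one, one_ne_zero, not_false_eq_true, zero_add]
  ring

namespace ZMod

theorem intCast_mul_eq_intCast_mul_iff {ℓ n R : ℕ} (hℓ : ℓ.Prime) (hn : n ≠ 0)
    (hR : padicValNat ℓ n ≤ R) (x y : ℤ) :
    ((n * x : ℤ) : ZMod (ℓ ^ R)) = ((n * y : ℤ) : ZMod (ℓ ^ R)) ↔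
      (x : ZMod (ℓ ^ (R - padicValNat ℓ n))) = y := by
  obtain ⟨m, hm, hnm⟩ := Nat.exists_eq_pow_padicValNat_mul hℓ hn
  generalize padicValNat ℓ n = v at *
  subst hnm
  have hcop : IsCoprime ((ℓ : ℤ) ^ (R - v)) m := by
    exact_mod_cast Nat.isCoprime_iff_coprime.2 ((hℓ.coprime_iff_not_dvd.2 hm).pow_left _)
  rw [intCast_eq_intCast_iff_dvd_sub, intCast_eq_intCast_iff_dvd_sub, ← mul_sub,
    ← Nat.add_sub_cancel' hR]
  push_cast
  rw [Nat.add_sub_cancel_left, pow_add, mul_assoc,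
    mul_dvd_mul_iff_left (pow_ne_zero _ (by exact_mod_cast hℓ.ne_zero))]
  exact ⟨hcop.dvd_of_dvd_mul_left, (Dvd.dvd.mul_left · _)⟩

theorem exists_intCast_mul_eq {ℓ n : ℕ} (hℓ : ℓ.Prime) (hn : n ≠ 0) (R : ℕ) {z : ℤ}
    (hz : (ℓ : ℤ) ^ padicValNat ℓ n ∣ z) : ∃ x : ℤ, ((n * x : ℤ) : ZMod (ℓ ^ R)) = z := by
  obtain ⟨m, hm, hnm⟩ := Nat.exists_eq_pow_padicValNat_mul hℓ hn
  generalize padicValNat ℓ n = v at *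
  subst hnm
  obtain ⟨w, rfl⟩ := hz
  obtain ⟨m', s, hm'⟩ : IsCoprime (m : ℤ) ((ℓ ^ R : ℕ) : ℤ) :=
    Nat.isCoprime_iff_coprime.2 ((hℓ.coprime_iff_not_dvd.2 hm).pow_left _).symm
  refine ⟨m' * w, (intCast_eq_intCast_iff_dvd_sub _ _ _).2 ⟨(ℓ : ℤ) ^ v * w * s, ?_⟩⟩
  push_cast at hm' ⊢
  linear_combination (-(ℓ : ℤ) ^ v * w) * hm'

/-- `x ↦ n x`, from `ℤ/ℓ^(r - ν_ℓ(n))` to `ℤ/ℓ^r`; well defined because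
`ℓ^r ∣ n ℓ^(r - ν_ℓ(n))`. -/
def mulLift (ℓ n r : ℕ) : ZMod (ℓ ^ (r - padicValNat ℓ n)) →+ ZMod (ℓ ^ r) :=
  ZMod.lift _ ⟨(Int.castAddHom _).comp (AddMonoidHom.mulLeft n), by
    have : ℓ ^ r ∣ n * ℓ ^ (r - padicValNat ℓ n) :=
      (pow_dvd_pow ℓ (by omega)).trans (pow_add ℓ _ _ ▸ mul_dvd_mul_right pow_padicValNat_dvd _)
    change ((n * ((ℓ ^ (r - padicValNat ℓ n) : ℕ) : ℤ) : ℤ) : ZMod (ℓ ^ r)) = 0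
    rw [intCast_zmod_eq_zero_iff_dvd]
    exact_mod_cast this⟩

section mulLift

variable {ℓ n r : ℕ}

theorem mulLift_intCast (x : ℤ) : mulLift ℓ n r x = ((n * x : ℤ) : ZMod (ℓ ^ r)) :=
  lift_coe _ _ x

theorem mulLift_mul_mulLift (x y : ZMod (ℓ ^ (r - padicValNat ℓ n))) :
    mulLift ℓ n r x * mulLift ℓ n r y = n * mulLift ℓ n r (x * y) := by
  obtain ⟨x, rfl⟩ := intCast_surjective x
  obtain ⟨y, rfl⟩ := intCast_surjective y
  rw [← Int.cast_mul, mulLift_intCast, mulLift_intCast, mulLift_intCast]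
  push_cast
  ring

theorem mulLift_injective (hℓ : ℓ.Prime) (hn : n ≠ 0) (hr : padicValNat ℓ n ≤ r) :
    Function.Injective (mulLift ℓ n r) := by
  intro x y hxy
  obtain ⟨x, rfl⟩ := intCast_surjective x
  obtain ⟨y, rfl⟩ := intCast_surjective y
  rwa [mulLift_intCast, mulLift_intCast, intCast_mul_eq_intCast_mul_iff hℓ hn hr] at hxy

theorem mul_mulLift_eq_mul_mulLift_iff (hℓ : ℓ.Prime) (hn : n ≠ 0)
    (hr : 2 * padicValNat ℓ n ≤ r) (x y : ZMod (ℓ ^ (r - padicValNat ℓ n))) :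
    n * mulLift ℓ n r x = n * mulLift ℓ n r y ↔
      (cast x : ZMod (ℓ ^ (r - 2 * padicValNat ℓ n))) = cast y := by
  have : Fact ℓ.Prime := ⟨hℓ⟩
  obtain ⟨x, rfl⟩ := intCast_surjective x
  obtain ⟨y, rfl⟩ := intCast_surjective y
  have hdvd : ℓ ^ (r - 2 * padicValNat ℓ n) ∣ ℓ ^ (r - padicValNat ℓ n) :=
    pow_dvd_pow ℓ (by omega)
  have hv : padicValNat ℓ (n ^ 2) = 2 * padicValNat ℓ n := padicValNat.pow n 2
  have key := intCast_mul_eq_intCast_mul_iff hℓ (pow_ne_zero 2 hn) (hv ▸ hr) x y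
  have hsq (z : ℤ) :
      (n * ((n * z : ℤ) : ZMod (ℓ ^ r))) = (((n ^ 2 : ℕ) * z : ℤ) : ZMod (ℓ ^ r)) := by
    push_cast
    ring
  rw [hv] at key
  rw [mulLift_intCast, mulLift_intCast, cast_intCast hdvd, cast_intCast hdvd, hsq, hsq]
  exact key

theorem exists_mulLift_eq_iff (hℓ : ℓ.Prime) (hn : n ≠ 0) (hr : padicValNat ℓ n ≤ r)
    (y : ZMod (ℓ ^ r)) :
    (∃ x, mulLift ℓ n r x = y) ↔ (cast y : ZMod (ℓ ^ padicValNat ℓ n)) = 0 := by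
  have hdvd : ℓ ^ padicValNat ℓ n ∣ ℓ ^ r := pow_dvd_pow ℓ hr
  obtain ⟨y, rfl⟩ := intCast_surjective y
  rw [cast_intCast hdvd, intCast_zmod_eq_zero_iff_dvd]
  constructor
  · rintro ⟨x, hx⟩
    obtain ⟨x, rfl⟩ := intCast_surjective x
    rw [mulLift_intCast, intCast_eq_intCast_iff_dvd_sub] at hx
    have h1 : ((ℓ ^ padicValNat ℓ n : ℕ) : ℤ) ∣ y - n * x :=
      (Int.natCast_dvd_natCast.2 hdvd).trans hx
    have h2 : ((ℓ ^ padicValNat ℓ n : ℕ) : ℤ) ∣ n * x :=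
      (Int.natCast_dvd_natCast.2 pow_padicValNat_dvd).mul_right x
    simpa using h1.add h2
  · intro hy
    obtain ⟨x, hx⟩ := exists_intCast_mul_eq hℓ hn r (by exact_mod_cast hy)
    exact ⟨x, by rw [mulLift_intCast, hx]⟩

theorem exists_one_add_map_mulLift_eq_iff [NeZero ℓ] {ι : Type*} [DecidableEq ι]
    (hℓ : ℓ.Prime) (hn : n ≠ 0) (hr : padicValNat ℓ n ≤ r) (σ : Matrix ι ι (ZMod (ℓ ^ r))) :
    (∃ τ : Matrix ι ι (ZMod (ℓ ^ (r - padicValNat ℓ n))), 1 + τ.map (mulLift ℓ n r) = σ) ↔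
      ∀ i j, ((σ i j).val : ZMod (ℓ ^ padicValNat ℓ n)) =
        (1 : Matrix ι ι (ZMod (ℓ ^ padicValNat ℓ n))) i j := by
  have hdvd : ℓ ^ padicValNat ℓ n ∣ ℓ ^ r := pow_dvd_pow ℓ hr
  have hentry (i j : ι) : ((σ i j).val : ZMod (ℓ ^ padicValNat ℓ n)) =
      (1 : Matrix ι ι (ZMod (ℓ ^ padicValNat ℓ n))) i j ↔
        ∃ x, mulLift ℓ n r x = (σ - 1) i j := by
    rw [exists_mulLift_eq_iff hℓ hn hr, Matrix.sub_apply, ← castHom_apply (h := hdvd), map_sub,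
      sub_eq_zero, castHom_apply, natCast_val, one_apply, one_apply]
    split_ifs <;> simp [cast_one hdvd]
  simp only [hentry]
  constructor
  · rintro ⟨τ, rfl⟩ i j
    exact ⟨τ i j, by simp⟩
  · intro h
    choose τ hτ using h
    exact ⟨Matrix.of τ, by ext i j; simp [hτ]⟩

theorem det_map_mulLift (τ : Matrix (Fin 2) (Fin 2) (ZMod (ℓ ^ (r - padicValNat ℓ n)))) :
    (τ.map (mulLift ℓ n r)).det = n * mulLift ℓ n r τ.det := by
  rw [det_fin_two, det_fin_two, map_sub, mul_sub]
  simp only [map_apply, mulLift_mul_mulLift]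

theorem trace_det_one_add_map_mulLift_iff [NeZero ℓ] (hℓ : ℓ.Prime) (hn : n ≠ 0)
    (hr : 2 * padicValNat ℓ n ≤ r) {t u t₁ u₁ : ℤ} (ht : n * t₁ = t - 2)
    (hu : n ^ 2 * u₁ = u + 1 - t)
    (τ : Matrix (Fin 2) (Fin 2) (ZMod (ℓ ^ (r - padicValNat ℓ n)))) :
    (1 + τ.map (mulLift ℓ n r)).trace = t ∧ (1 + τ.map (mulLift ℓ n r)).det = u ↔
      τ.trace = t₁ ∧ (τ.det.val : ZMod (ℓ ^ (r - 2 * padicValNat ℓ n))) = u₁ := by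
  have htrace : (1 + τ.map (mulLift ℓ n r)).trace = 2 + mulLift ℓ n r τ.trace := by
    rw [trace_add, trace_one, AddMonoidHom.map_trace, Fintype.card_fin, Nat.cast_ofNat]
  have hdet : (1 + τ.map (mulLift ℓ n r)).det =
      1 + mulLift ℓ n r τ.trace + n * mulLift ℓ n r τ.det := by
    rw [det_one_add_fin_two, ← AddMonoidHom.map_trace, det_map_mulLift]
  have ht' : (t : ZMod (ℓ ^ r)) = 2 + mulLift ℓ n r t₁ := by
    rw [mulLift_intCast, ht]
    push_cast
    ring
  have hu' : (u : ZMod (ℓ ^ r)) = 1 + mulLift ℓ n r t₁ + n * mulLift ℓ n r u₁ := by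
    rw [mulLift_intCast, mulLift_intCast,
      show u = 1 + n * t₁ + n * (n * u₁) by linear_combination -ht - hu]
    push_cast
    ring
  have hdvd : ℓ ^ (r - 2 * padicValNat ℓ n) ∣ ℓ ^ (r - padicValNat ℓ n) :=
    pow_dvd_pow ℓ (by omega)
  rw [htrace, hdet, ht', hu', add_right_inj, (mulLift_injective hℓ hn (by omega)).eq_iff]
  refine and_congr_right fun htr => ?_
  rw [htr, add_right_inj, mul_mulLift_eq_mul_mulLift_iff hℓ hn hr, natCast_val,
    cast_intCast hdvd]

end mulLift

end ZMod

open Classical in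
theorem card_matrices_congruent_identity_general (ℓ : ℕ) (hℓ : ℓ.Prime) [NeZero ℓ]
    (r : ℕ) (t u : ℤ) (n : ℕ) (hn : 1 ≤ n)
    (hu : (n : ℤ) ∣ u - 1) (hut : ((n : ℤ)) ^ 2 ∣ u + 1 - t)
    (hra : 2 * padicValNat ℓ n ≤ r) :
    Fintype.card {σ : Matrix (Fin 2) (Fin 2) (ZMod (ℓ ^ r)) //
        σ.trace = (t : ZMod (ℓ ^ r)) ∧ σ.det = (u : ZMod (ℓ ^ r)) ∧
        ∀ i j, ((σ i j).val : ZMod (ℓ ^ padicValNat ℓ n)) =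
          (1 : Matrix (Fin 2) (Fin 2) (ZMod (ℓ ^ padicValNat ℓ n))) i j} =
      ∑ u₂ : ZMod (ℓ ^ (r - padicValNat ℓ n)),
        if ((u₂.val : ZMod (ℓ ^ (r - 2 * padicValNat ℓ n))) =
            (((u + 1 - t) / (n : ℤ) ^ 2 : ℤ) : ZMod (ℓ ^ (r - 2 * padicValNat ℓ n)))) then
          Fintype.card {σ : Matrix (Fin 2) (Fin 2) (ZMod (ℓ ^ (r - padicValNat ℓ n))) //
            σ.trace = (((t - 2) / (n : ℤ) : ℤ) : ZMod (ℓ ^ (r - padicValNat ℓ n))) ∧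
            σ.det = u₂}
        else 0 := by
  have hn0 : n ≠ 0 := by omega
  have ht₁ : (n : ℤ) * ((t - 2) / n) = t - 2 := by
    refine Int.mul_ediv_cancel' ?_
    rw [show t - 2 = (u - 1) - (u + 1 - t) by ring]
    exact hu.sub ((dvd_pow_self (n : ℤ) two_ne_zero).trans hut)
  have hu₁ : (n : ℤ) ^ 2 * ((u + 1 - t) / n ^ 2) = u + 1 - t := Int.mul_ediv_cancel' hut
  rw [Fintype.sum_ite_card_fiber Matrix.det,
    ← Fintype.card_subtype_comp_eq_of_injective
      (G := fun τ : Matrix (Fin 2) (Fin 2) (ZMod (ℓ ^ (r - padicValNat ℓ n))) =>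
        1 + τ.map (ZMod.mulLift ℓ n r))
      ((add_right_injective 1).comp
        (Matrix.map_injective (ZMod.mulLift_injective hℓ hn0 (by omega))))
      (fun σ => σ.trace = (t : ZMod (ℓ ^ r)) ∧ σ.det = (u : ZMod (ℓ ^ r))) _
      (fun σ => by rw [ZMod.exists_one_add_map_mulLift_eq_iff hℓ hn0 (by omega)]; tauto)]
  exact Fintype.card_congr (Equiv.subtypeEquivRight
    (ZMod.trace_det_one_add_map_mulLift_iff hℓ hn0 hra ht₁ hu₁))

open Classical in
/-- Let `ℓ` be prime, `r ≥ 1`, and `t, u, n` integers with `n ≥ 1`, `u ≡ 1 (mod n)`,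
`u + 1 − t ≡ 0 (mod n²)`. Write `a = ν_ℓ(n)`, `t₁ = (t−2)/n`, `u₁ = (u+1−t)/n²`.
Assuming `r ≥ 2a`,
`#{σ ∈ M₂(ℤ/ℓ^r ℤ) : tr σ ≡ t, det σ ≡ u (mod ℓ^r), σ ≡ I (mod ℓ^a)}
  = Σ_{u₂ mod ℓ^{r−a}, u₂ ≡ u₁ (mod ℓ^{r−2a})}
      #{σ ∈ M₂(ℤ/ℓ^{r−a} ℤ) : tr σ ≡ t₁, det σ ≡ u₂ (mod ℓ^{r−a})}`. -/
theorem card_matrices_congruent_identity (ℓ : ℕ) (hℓ : ℓ.Prime) [NeZero ℓ]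
    (r : ℕ) (hr1 : 1 ≤ r) (t u : ℤ) (n : ℕ) (hn : 1 ≤ n)
    (hu : (n : ℤ) ∣ u - 1) (hut : ((n : ℤ)) ^ 2 ∣ u + 1 - t)
    (hra : 2 * padicValNat ℓ n ≤ r) :
    Fintype.card {σ : Matrix (Fin 2) (Fin 2) (ZMod (ℓ ^ r)) //
        σ.trace = (t : ZMod (ℓ ^ r)) ∧ σ.det = (u : ZMod (ℓ ^ r)) ∧
        ∀ i j, ((σ i j).val : ZMod (ℓ ^ padicValNat ℓ n)) =
          (1 : Matrix (Fin 2) (Fin 2) (ZMod (ℓ ^ padicValNat ℓ n))) i j} =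
      ∑ u₂ : ZMod (ℓ ^ (r - padicValNat ℓ n)),
        if ((u₂.val : ZMod (ℓ ^ (r - 2 * padicValNat ℓ n))) =
            (((u + 1 - t) / (n : ℤ) ^ 2 : ℤ) : ZMod (ℓ ^ (r - 2 * padicValNat ℓ n)))) then
          Fintype.card {σ : Matrix (Fin 2) (Fin 2) (ZMod (ℓ ^ (r - padicValNat ℓ n))) //
            σ.trace = (((t - 2) / (n : ℤ) : ℤ) : ZMod (ℓ ^ (r - padicValNat ℓ n))) ∧
            σ.det = u₂}
        else 0 :=
  card_matrices_congruent_identity_general ℓ hℓ r t u n hn hu hut hra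
end
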